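/- arXiv:1905.11546 — 3 statements merged into one kernel-verified Lean document; each statement's English description precedes it below -/
import Mathlib

section
/- For a square matrix A expressible as A = Σ_i s_i Z_i where the s_i are independent real random variables and each Z_i is a fixed rank-one square matrix, the expectation of the determinant equals the determinant of the expectation: E[det(A)] = det(E[A]). -/
/-!
Expanding the determinant multilinearly in its rows writes `det (∑ i, t i • Z i)` as a sum, over
maps `r` from rows to indices, of `∏ j, t (r j)` times the determinant whose `j`-th row is the
`j`-th row of `Z (r j)`. Two rows taken from the same rank-one matrix are proportional, so only
injective `r` contribute: every monomial is a product of distinct `t i`. For such a monomial in the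
independent `s i`, the expectation is the same monomial in the expectations `E[s i]`.
-/

open MeasureTheory Matrix

namespace Matrix

theorem exists_eq_vecMulVec_of_rank_le_one {m n K : Type*} [Finite m] [Fintype n] [Field K]
    (M : Matrix m n K) (h : M.rank ≤ 1) : ∃ (u : m → K) (v : n → K), M = vecMulVec u v := by
  rw [rank_eq_finrank_span_row, finrank_le_one_iff] at h
  obtain ⟨v, hv⟩ := h
  choose u hu using fun i ↦ hv ⟨M.row i, Submodule.subset_span (Set.mem_range_self i)⟩
  refine ⟨u, v, ?_⟩
  ext i j
  simpa [vecMulVec_apply] using (congrFun (congrArg Subtype.val (hu i)) j).symm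

variable {m ι R K : Type*} [Fintype m] [DecidableEq m]

theorem det_sum_smul [Fintype ι] [CommRing R] (Z : ι → Matrix m m R) (t : ι → R) :
    (∑ i, t i • Z i).det =
      ∑ r : m → ι, (∏ j, t (r j)) * (of fun j ↦ Z (r j) j).det := by
  have hrows : (∑ i, t i • Z i).det = detRowAlternating fun j ↦ ∑ i, t i • Z i j := by
    congr 1
    ext j k
    simp only [sum_apply, smul_apply, Finset.sum_apply, Pi.smul_apply]
  rw [hrows, ← AlternatingMap.coe_multilinearMap, MultilinearMap.map_sum]
  refine Finset.sum_congr rfl fun r _ ↦ ?_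
  rw [AlternatingMap.coe_multilinearMap, AlternatingMap.map_smul_univ, smul_eq_mul]
  rfl

theorem det_of_rows_eq_zero_of_not_injective [Field K] {Z : ι → Matrix m m K}
    (hZ : ∀ i, (Z i).rank ≤ 1) {r : m → ι} (hr : ¬ r.Injective) :
    (of fun j ↦ Z (r j) j).det = 0 := by
  choose u v hZuv using fun i ↦ exists_eq_vecMulVec_of_rank_le_one (Z i) (hZ i)
  obtain ⟨j₁, j₂, hrj, hne⟩ := Function.not_injective_iff.1 hr
  have hfactor :
      (of fun j ↦ Z (r j) j).det = (∏ j, u (r j) j) * (of fun j ↦ v (r j)).det := by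
    rw [← det_mul_column]
    congr 1
    ext j k
    rw [of_apply, of_apply, of_apply, hZuv, vecMulVec_apply]
  rw [hfactor, det_zero_of_row_eq hne (congrArg v hrj), mul_zero]

theorem det_sum_smul_of_rank_le_one [Fintype ι] [DecidableEq ι] [Field K]
    {Z : ι → Matrix m m K} (hZ : ∀ i, (Z i).rank ≤ 1) (t : ι → K) :
    (∑ i, t i • Z i).det =
      ∑ r : m → ι with r.Injective, (∏ j, t (r j)) * (of fun j ↦ Z (r j) j).det := by
  rw [det_sum_smul, Finset.sum_filter_of_ne]
  intro r _ hne
  by_contra hr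
  exact hne (by rw [det_of_rows_eq_zero_of_not_injective hZ hr, mul_zero])

end Matrix

theorem det_expectation_eq_general {Ω : Type*} [MeasurableSpace Ω] (μ : Measure Ω)
    [IsProbabilityMeasure μ] {n d : ℕ}
    (Z : Fin n → Matrix (Fin d) (Fin d) ℝ) (hZ : ∀ i, (Z i).rank ≤ 1)
    (s : Fin n → Ω → ℝ)
    (hindep : ProbabilityTheory.iIndepFun s μ)
    (hint : ∀ S : Finset (Fin n), Integrable (fun ω => ∏ i ∈ S, s i ω) μ) :
    ∫ ω, (∑ i, s i ω • Z i).det ∂μ = (∑ i, (∫ ω, s i ω ∂μ) • Z i).det := by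
  have hs : ∀ i, AEStronglyMeasurable (s i) μ := fun i ↦ by
    simpa using (hint {i}).aestronglyMeasurable
  have hprod :
      ∀ r : Fin d → Fin n, r.Injective → Integrable (fun ω ↦ ∏ j, s (r j) ω) μ :=
    fun r hr ↦ by simpa [Finset.prod_map] using hint (Finset.univ.map ⟨r, hr⟩)
  simp_rw [det_sum_smul_of_rank_le_one hZ]
  rw [integral_finsetSum _ fun r hmem ↦
    (hprod r ((Finset.mem_filter_univ r).1 hmem)).mul_const _]
  refine Finset.sum_congr rfl fun r hmem ↦ ?_
  have hr : r.Injective := (Finset.mem_filter_univ r).1 hmem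
  rw [integral_mul_const,
    (hindep.precomp hr).integral_fun_prod_eq_prod_integral fun j ↦ hs (r j)]

/-- Expectation of the determinant of a sum of independently scaled rank-one matrices
equals the determinant of the expectation. -/
theorem det_expectation_eq {Ω : Type*} [MeasurableSpace Ω] (μ : Measure Ω)
    [IsProbabilityMeasure μ] {n d : ℕ}
    (Z : Fin n → Matrix (Fin d) (Fin d) ℝ) (hZ : ∀ i, (Z i).rank ≤ 1)
    (s : Fin n → Ω → ℝ) (hmeas : ∀ i, Measurable (s i))
    (hindep : ProbabilityTheory.iIndepFun s μ)
    (hint : ∀ S : Finset (Fin n), Integrable (fun ω => ∏ i ∈ S, s i ω) μ) :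
    ∫ ω, (∑ i, s i ω • Z i).det ∂μ = (∑ i, (∫ ω, s i ω ∂μ) • Z i).det :=
  det_expectation_eq_general μ Z hZ s hindep hint
end

section
/- For real p ≥ 2 and 0 < η ≤ 1/4, if a nonnegative random variable X satisfies Pr(X ≥ 1+x) ≤ exp(−ln(1+x) · p/η²) for all x ≥ e−1, then ∫_{e−1}^∞ p x^{p−1} Pr(X ≥ 1+x) dx ≤ p (η²)^p. -/
/-!
The tail is dominated by `(1 + x) ^ (-p/η²)`, so the integrand is at most `p (1 + x) ^ b` with
`b = p - 1 - p/η² ≤ -2`. Integrating from `e - 1` gives `p e^(b+1) / (-(b+1)) ≤ p e^(p - p/η²)`,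
and `1 - 1/t ≤ log t` at `t = η²` turns `e^(p(1 - 1/η²))` into `(η²)^p`.
-/

open MeasureTheory Set Filter Topology Real

theorem integral_Ioi_add_rpow_of_lt {a c m : ℝ} (ha : a < -1) (hc : -m < c) :
    ∫ x in Ioi c, (x + m) ^ a = -(c + m) ^ (a + 1) / (a + 1) := by
  have hd : ∀ x ∈ Ici c, HasDerivAt (fun t ↦ (t + m) ^ (a + 1) / (a + 1)) ((x + m) ^ a) x := by
    intro x hx
    refine ((((hasDerivAt_id' x).add_const m).rpow_const (p := a + 1)
      (Or.inl (by linarith [mem_Ici.mp hx] : 0 < x + m).ne')).div_const (a + 1)).congr_deriv ?_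
    rw [add_sub_cancel_right]
    field_simp [show a + 1 ≠ 0 by linarith]
  have ht : Tendsto (fun t ↦ (t + m) ^ (a + 1) / (a + 1)) atTop (𝓝 (0 / (a + 1))) := by
    rw [← neg_neg (a + 1)]
    exact ((tendsto_rpow_neg_atTop (by linarith)).comp
      (tendsto_atTop_add_const_right _ m tendsto_id)).div_const _
  rw [integral_Ioi_of_hasDerivAt_of_tendsto' hd (integrableOn_add_rpow_Ioi_of_lt ha hc) ht]
  ring

theorem integral_Ioi_exp_one_sub_one_add_rpow_le {b : ℝ} (hb : b ≤ -2) :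
    ∫ x in Ioi (exp 1 - 1), (x + 1) ^ b ≤ exp (b + 1) := by
  rw [integral_Ioi_add_rpow_of_lt (by linarith) (by linarith [exp_pos 1]), sub_add_cancel,
    exp_one_rpow, neg_div, ← div_neg]
  exact div_le_self (exp_pos _).le (by linarith)

theorem Real.exp_mul_one_sub_inv_le_rpow {t p : ℝ} (ht : 0 < t) (hp : 0 ≤ p) :
    exp (p * (1 - t⁻¹)) ≤ t ^ p := by
  rw [rpow_def_of_pos ht, exp_le_exp, mul_comm (log t)]
  exact mul_le_mul_of_nonneg_left (one_sub_inv_le_log_of_pos ht) hp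

theorem mul_rpow_sub_one_mul_le_of_le_exp {p q x y : ℝ} (hp : 1 ≤ p) (hx : 0 ≤ x) (hy : 0 ≤ y)
    (hyx : y ≤ exp (-log (1 + x) * q)) :
    p * x ^ (p - 1) * y ≤ p * (x + 1) ^ (p - 1 - q) := by
  have hx1 : 0 < x + 1 := by linarith
  rw [add_comm 1 x, neg_mul, ← mul_neg, ← rpow_def_of_pos hx1] at hyx
  rw [sub_eq_add_neg (p - 1) q, rpow_add hx1, ← mul_assoc]
  gcongr
  linarith

theorem tail_integral_bound_general {Ω : Type*} [MeasurableSpace Ω] (μ : Measure Ω)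
    (p η : ℝ) (hp : 2 ≤ p) (hη0 : 0 < η) (hη : η ≤ 1 / 4)
    (X : Ω → ℝ)
    (htail : ∀ x : ℝ, Real.exp 1 - 1 ≤ x →
      μ {ω | 1 + x ≤ X ω} ≤ ENNReal.ofReal (Real.exp (-(Real.log (1 + x)) * p / η ^ 2))) :
    ∫ x in Ici (Real.exp 1 - 1),
        p * x ^ (p - 1) * (μ {ω | 1 + x ≤ X ω}).toReal ≤ p * (η ^ 2) ^ p := by
  have hη2 : 0 < η ^ 2 := by positivity
  have hdecay : p - 1 - p / η ^ 2 ≤ -2 := by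
    have : η ^ 2 ≤ 1 / 16 := by nlinarith
    have : 16 * p ≤ p / η ^ 2 := by rw [le_div_iff₀ hη2]; nlinarith
    linarith
  have hpos : ∀ x ∈ Ioi (exp 1 - 1), 0 < x := fun x hx ↦ by
    linarith [mem_Ioi.mp hx, add_one_le_exp 1]
  have hbound : ∀ x ∈ Ioi (exp 1 - 1), p * x ^ (p - 1) * (μ {ω | 1 + x ≤ X ω}).toReal ≤
      p * (x + 1) ^ (p - 1 - p / η ^ 2) := fun x hx ↦
    mul_rpow_sub_one_mul_le_of_le_exp (by linarith) (hpos x hx).le ENNReal.toReal_nonneg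
      (ENNReal.toReal_le_of_le_ofReal (exp_nonneg _) <| by
        simpa only [mul_div_assoc] using htail x (mem_Ioi.mp hx).le)
  rw [setIntegral_congr_set Ioi_ae_eq_Ici.symm]
  calc _ ≤ ∫ x in Ioi (exp 1 - 1), p * (x + 1) ^ (p - 1 - p / η ^ 2) := by
        refine integral_mono_of_nonneg ?_
          ((integrableOn_add_rpow_Ioi_of_lt (by linarith) (by linarith [exp_pos 1])).const_mul p)
          ((ae_restrict_iff' measurableSet_Ioi).mpr (.of_forall hbound))
        filter_upwards [ae_restrict_mem measurableSet_Ioi] with x hx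
        have := hpos x hx
        positivity
    _ ≤ p * exp (p * (1 - (η ^ 2)⁻¹)) := by
        rw [integral_const_mul]
        gcongr
        exact (integral_Ioi_exp_one_sub_one_add_rpow_le hdecay).trans_eq (by congr 1; ring)
    _ ≤ p * (η ^ 2) ^ p := by gcongr; exact exp_mul_one_sub_inv_le_rpow hη2 (by linarith)

/-- Tail integral bound: if a nonnegative random variable `X` satisfies
`Pr(X ≥ 1 + x) ≤ exp(-ln(1+x)·p/η²)` for all `x ≥ e - 1`, then
`∫_{e-1}^∞ p x^{p-1} Pr(X ≥ 1+x) dx ≤ p (η²)^p`. -/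
theorem tail_integral_bound {Ω : Type*} [MeasurableSpace Ω] (μ : Measure Ω)
    [IsProbabilityMeasure μ] (p η : ℝ) (hp : 2 ≤ p) (hη0 : 0 < η) (hη : η ≤ 1 / 4)
    (X : Ω → ℝ) (hX : ∀ ω, 0 ≤ X ω)
    (htail : ∀ x : ℝ, Real.exp 1 - 1 ≤ x →
      μ {ω | 1 + x ≤ X ω} ≤ ENNReal.ofReal (Real.exp (-(Real.log (1 + x)) * p / η ^ 2))) :
    ∫ x in Ici (Real.exp 1 - 1),
        p * x ^ (p - 1) * (μ {ω | 1 + x ≤ X ω}).toReal ≤ p * (η ^ 2) ^ p :=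
  tail_integral_bound_general μ p η hp hη0 hη X htail
end

section
/- Let A be a symmetric matrix whose eigenvalues all lie in [1−δ, 1+δ] for some 0 ≤ δ < 1, and suppose δ² ≤ 1/d·s and tr(I − A) ≤ τ. Then the smallest eigenvalue of adj(A) satisfies λ_min(adj(A)) ≥ det(A)/(1+δ) ≥ (1−δ)(1−dδ²)(1−τ). -/
/-!
Since `A` is positive definite, `adj A = det A • A⁻¹`, and `A⁻¹ = f(A)` for `f x = x⁻¹`, which is
at least `(1 + δ)⁻¹` on the spectrum of `A`; the functional calculus turns this into
`A⁻¹ ≥ (1 + δ)⁻¹ • 1`.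

For the determinant, every eigenvalue `λ ∈ [1 - δ, 1 + δ]` satisfies
`λ e^{1-λ} ≥ λ (2 - λ) = 1 - (1 - λ)² ≥ 1 - δ²`. Taking the product over the eigenvalues gives
`det A · e^τ ≥ (1 - δ²)^d ≥ 1 - dδ²` (Bernoulli), hence `det A ≥ (1 - dδ²) e^{-τ} ≥ (1 - dδ²)(1 - τ)`.
-/

open scoped MatrixOrder ComplexOrder

lemma Real.one_sub_sq_le_mul_exp_one_sub {x δ : ℝ} (hδ : δ ^ 2 ≤ 1)
    (hx : x ∈ Set.Icc (1 - δ) (1 + δ)) : 1 - δ ^ 2 ≤ x * Real.exp (1 - x) := by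
  obtain ⟨hlo, hhi⟩ := hx
  have hx0 : 0 ≤ x := by nlinarith
  calc 1 - δ ^ 2 ≤ x * (1 - x + 1) := by nlinarith
    _ ≤ x * Real.exp (1 - x) := mul_le_mul_of_nonneg_left (Real.add_one_le_exp _) hx0

namespace Matrix

variable {n : Type*} [Fintype n] [DecidableEq n]

lemma adjugate_eq_det_smul_inv {α : Type*} [CommRing α] {A : Matrix n n α} (h : IsUnit A.det) :
    A.adjugate = A.det • A⁻¹ := by
  rw [inv_def, smul_smul, Ring.mul_inverse_cancel _ h, one_smul]

namespace IsHermitian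

lemma inv_smul_one_le_inv {𝕜 : Type*} [RCLike 𝕜] {A : Matrix n n 𝕜} (hA : A.IsHermitian)
    {b : ℝ} (hpos : ∀ i, 0 < hA.eigenvalues i) (hle : ∀ i, hA.eigenvalues i ≤ b) :
    b⁻¹ • (1 : Matrix n n 𝕜) ≤ A⁻¹ := by
  have hspec : ∀ x ∈ spectrum ℝ A, 0 < x ∧ x ≤ b := by
    intro x hx
    obtain ⟨i, rfl⟩ := hA.spectrum_real_eq_range_eigenvalues ▸ hx
    exact ⟨hpos i, hle i⟩
  rw [← Algebra.algebraMap_eq_smul_one, nonsing_inv_eq_ringInverse,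
    ← cfc_ringInverse_id (R := ℝ) A (hA.posDef_iff_eigenvalues_pos.mpr hpos).isUnit]
  exact algebraMap_le_cfc _ _ A (fun x hx => inv_anti₀ (hspec x hx).1 (hspec x hx).2)
    (continuousOn_inv₀.mono fun x hx => (hspec x hx).1.ne')

variable {A : Matrix n n ℝ} (hA : A.IsHermitian)

lemma posSemidef_adjugate_sub_det_div_smul_one {b : ℝ} (hpos : ∀ i, 0 < hA.eigenvalues i)
    (hle : ∀ i, hA.eigenvalues i ≤ b) : (A.adjugate - (A.det / b) • 1).PosSemidef := by
  have hdet : 0 < A.det := (hA.posDef_iff_eigenvalues_pos.mpr hpos).det_pos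
  have hinv : (A⁻¹ - b⁻¹ • 1).PosSemidef := hA.inv_smul_one_le_inv hpos hle
  rw [adjugate_eq_det_smul_inv hdet.ne'.isUnit, div_eq_mul_inv, mul_smul, ← smul_sub]
  exact hinv.smul hdet.le

lemma trace_one_sub_eq_sum : (1 - A).trace = ∑ i, (1 - hA.eigenvalues i) := by
  simp [trace_sub, hA.trace_eq_sum_eigenvalues, Finset.sum_sub_distrib]

lemma one_sub_sq_pow_le_det_mul_exp_trace {δ : ℝ} (hδ : δ ^ 2 ≤ 1)
    (heig : ∀ i, hA.eigenvalues i ∈ Set.Icc (1 - δ) (1 + δ)) :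
    (1 - δ ^ 2) ^ Fintype.card n ≤ A.det * Real.exp (1 - A).trace :=
  calc (1 - δ ^ 2) ^ Fintype.card n = ∏ _i : n, (1 - δ ^ 2) := by simp
    _ ≤ ∏ i, hA.eigenvalues i * Real.exp (1 - hA.eigenvalues i) :=
        Finset.prod_le_prod (fun _ _ => by linarith) fun i _ =>
          Real.one_sub_sq_le_mul_exp_one_sub hδ (heig i)
    _ = A.det * Real.exp (1 - A).trace := by
        rw [Finset.prod_mul_distrib, ← Real.exp_sum, ← hA.trace_one_sub_eq_sum,
          hA.det_eq_prod_eigenvalues]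
        rfl

lemma one_sub_card_mul_sq_mul_one_sub_trace_le_det {δ : ℝ} (hδ : Fintype.card n * δ ^ 2 ≤ 1)
    (heig : ∀ i, hA.eigenvalues i ∈ Set.Icc (1 - δ) (1 + δ)) :
    (1 - Fintype.card n * δ ^ 2) * (1 - (1 - A).trace) ≤ A.det := by
  rcases isEmpty_or_nonempty n with hn | hn
  · simp
  have hδ1 : δ ^ 2 ≤ 1 :=
    (le_mul_of_one_le_left (sq_nonneg δ) (by exact_mod_cast Fintype.card_pos)).trans hδ
  set τ := (1 - A).trace
  have hbernoulli : 1 - Fintype.card n * δ ^ 2 ≤ (1 - δ ^ 2) ^ Fintype.card n := by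
    simpa [sub_eq_add_neg] using one_add_mul_le_pow (a := -δ ^ 2) (by linarith) (Fintype.card n)
  calc (1 - Fintype.card n * δ ^ 2) * (1 - τ)
      ≤ (1 - Fintype.card n * δ ^ 2) * Real.exp (-τ) := by
        gcongr
        linarith [Real.add_one_le_exp (-τ)]
    _ ≤ A.det * Real.exp τ * Real.exp (-τ) := by
        gcongr
        exact hbernoulli.trans (hA.one_sub_sq_pow_le_det_mul_exp_trace hδ1 heig)
    _ = A.det := by rw [mul_assoc, ← Real.exp_add, add_neg_cancel, Real.exp_zero, mul_one]

end IsHermitian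

end Matrix

/-- If the eigenvalues of a symmetric matrix `A` lie in `[1-δ, 1+δ]` with `0 ≤ δ < 1` and
`δ² ≤ 1/d`, and `τ = tr(I - A)`, then
`λ_min(adj A) ≥ det A / (1+δ) ≥ (1-δ)(1-dδ²)(1-τ)`. -/
theorem adjugate_lower_bound {d : ℕ} (A : Matrix (Fin d) (Fin d) ℝ)
    (hA : A.IsHermitian) (δ τ : ℝ) (hδ0 : 0 ≤ δ) (hδ1 : δ < 1)
    (hδd : δ ^ 2 ≤ 1 / d)
    (heig : ∀ i, 1 - δ ≤ hA.eigenvalues i ∧ hA.eigenvalues i ≤ 1 + δ)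
    (hτ : τ = ((1 : Matrix (Fin d) (Fin d) ℝ) - A).trace) :
    (A.adjugate - (A.det / (1 + δ)) • (1 : Matrix (Fin d) (Fin d) ℝ)).PosSemidef ∧
    (1 - δ) * (1 - d * δ ^ 2) * (1 - τ) ≤ A.det / (1 + δ) := by
  have hpos : ∀ i, 0 < hA.eigenvalues i := fun i => by linarith [(heig i).1]
  have hdδ : (Fintype.card (Fin d) : ℝ) * δ ^ 2 ≤ 1 := by
    rcases d.eq_zero_or_pos with rfl | hd
    · simp
    · rwa [Fintype.card_fin, ← le_div_iff₀' (by positivity)]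
  have hdet : (1 - d * δ ^ 2) * (1 - τ) ≤ A.det := by
    simpa [hτ] using hA.one_sub_card_mul_sq_mul_one_sub_trace_le_det hdδ heig
  refine ⟨hA.posSemidef_adjugate_sub_det_div_smul_one hpos fun i => (heig i).2, ?_⟩
  rw [le_div_iff₀ (by linarith)]
  calc (1 - δ) * (1 - d * δ ^ 2) * (1 - τ) * (1 + δ)
      = (1 - δ ^ 2) * ((1 - d * δ ^ 2) * (1 - τ)) := by ring
    _ ≤ (1 - δ ^ 2) * A.det := mul_le_mul_of_nonneg_left hdet (by nlinarith)
    _ ≤ A.det := mul_le_of_le_one_left (hA.posDef_iff_eigenvalues_pos.mpr hpos).det_pos.le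
        (by nlinarith)
end
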